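/- arXiv:2003.12699 — 2 statements merged into one kernel-verified Lean document; each statement's English description precedes it below -/
import Mathlib

section
/- Let A be a finite set of K actions, f : A → [0,1] with maximizer â, γ > 0, and p the probability distribution given by p(a) = 1/(K + γ(f(â) - f(a))) for a ≠ â and p(â) = 1 - Σ_{a≠â} p(a). Then Σ_{a∈A} p(a)·(f(â) - f(a)) ≤ (K-1)/γ. -/
open Finset

theorem stmt_4 {A : Type*} [Fintype A] [DecidableEq A]
    (hK : 2 ≤ Fintype.card A)
    (f : A → ℝ) (hf : ∀ a, f a ∈ Set.Icc (0:ℝ) 1)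
    (ahat : A) (hahat : ∀ a, f a ≤ f ahat)
    (γ : ℝ) (hγ : 0 < γ)
    (p : A → ℝ)
    (hp_ne : ∀ a, a ≠ ahat →
      p a = 1 / ((Fintype.card A : ℝ) + γ * (f ahat - f a)))
    (hp_hat : p ahat = 1 - ∑ a ∈ Finset.univ.erase ahat, p a) :
    ∑ a, p a * (f ahat - f a) ≤ ((Fintype.card A : ℝ) - 1) / γ := by
  have hK0 : (0:ℝ) < (Fintype.card A : ℝ) := by positivity
  rw [← Finset.add_sum_erase _ _ (Finset.mem_univ ahat)]
  have h0 : p ahat * (f ahat - f ahat) = 0 := by ring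
  rw [h0, zero_add]
  have hbound : ∀ a ∈ Finset.univ.erase ahat, p a * (f ahat - f a) ≤ 1 / γ := by
    intro a ha
    have hne : a ≠ ahat := (Finset.mem_erase.mp ha).1
    have hΔ : 0 ≤ f ahat - f a := by linarith [hahat a]
    have hden : 0 < (Fintype.card A : ℝ) + γ * (f ahat - f a) := by positivity
    rw [hp_ne a hne, div_mul_eq_mul_div, one_mul, div_le_div_iff₀ hden hγ]
    nlinarith
  calc ∑ a ∈ Finset.univ.erase ahat, p a * (f ahat - f a)
      ≤ ∑ _a ∈ Finset.univ.erase ahat, 1 / γ := Finset.sum_le_sum hbound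
    _ = ((Fintype.card A : ℝ) - 1) / γ := by
        rw [Finset.sum_const, Finset.card_erase_of_mem (Finset.mem_univ ahat),
          Finset.card_univ, nsmul_eq_mul]
        have h1 : (1:ℕ) ≤ Fintype.card A := by omega
        push_cast [h1]
        ring
end

section
/- Let X be a context space with distribution D, A a finite set of K actions, f : X × A → [0,1] a predictor with greedy action â(x) = argmax_a f(x,a), γ > 0, and p(·|x) the inverse-gap distribution induced by f and γ. Let Q be the product measure on A^X with Q({π : π(x)=a}) = p(a|x). Then ∫_{A^X} E_{x∼D}[f(x,â(x)) - f(x,π(x))] dQ(π) ≤ K/γ. -/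
/-!
Tonelli is not available here: for the product σ-algebra on `X → A` the evaluation
`(x, π) ↦ π x` need not be jointly measurable. Instead, take a measurable minorant `φ` of
`π ↦ ∫⁻ x, gap x (π x) ∂D` with the same `Q`-integral. It depends on countably many coordinates
`{e n}`, so `φ π` is at most the regret of the policy that follows `π` on `{e n}` and is greedy
elsewhere. That regret vanishes off `{e n}`, and measurable functions are constant on measurable
atoms, so its lower integral is at most `∑ D (E n) * gap (e n) (π (e n))` for disjoint measurable
sets `E n`. Integrating in `π` only uses the one-dimensional marginals of `Q`, where the
inverse-gap weights give `∑ a, gap x a * p x a ≤ K / γ`.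
-/

open MeasureTheory Finset
open scoped ENNReal

section Pi

variable {ι : Type*} {α : ι → Type*} [∀ i, MeasurableSpace (α i)]

theorem MeasurableSet.exists_countable_dependsOn {B : Set (∀ i, α i)} (hB : MeasurableSet B) :
    ∃ S : Set ι, S.Countable ∧ DependsOn (· ∈ B) S := by
  rw [MeasurableSet, MeasurableSpace.pi_eq_generateFrom_projections] at hB
  induction B, hB using MeasurableSpace.generateFrom_induction with
  | hC _ hB =>
    obtain ⟨i, A, -, rfl⟩ := hB
    exact ⟨{i}, Set.countable_singleton i, fun x y h => by simp [h i rfl]⟩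
  | empty => exact ⟨∅, Set.countable_empty, dependsOn_const False⟩
  | compl B _ ih =>
    obtain ⟨S, hS, hB⟩ := ih
    exact ⟨S, hS, fun x y h => congrArg Not (hB h)⟩
  | iUnion B _ ih =>
    choose S hS hB using ih
    refine ⟨⋃ n, S n, Set.countable_iUnion hS, fun x y h => ?_⟩
    simp only [Set.mem_iUnion]
    exact propext <| exists_congr fun n =>
      (hB n fun i hi => h i (Set.mem_iUnion_of_mem n hi)).to_iff

theorem Measurable.exists_countable_dependsOn {β : Type*} [MeasurableSpace β]
    [MeasurableSpace.CountablySeparated β] {φ : (∀ i, α i) → β} (hφ : Measurable φ) :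
    ∃ S : Set ι, S.Countable ∧ DependsOn φ S := by
  obtain ⟨C, hC, hCmeas, hsep⟩ := exists_countable_separating β MeasurableSet Set.univ
  have hdep : ∀ c ∈ C, ∃ S : Set ι, S.Countable ∧ DependsOn (· ∈ φ ⁻¹' c) S :=
    fun c hc => (hφ (hCmeas c hc)).exists_countable_dependsOn
  choose! S hS hdep using hdep
  refine ⟨⋃ c ∈ C, S c, hC.biUnion hS, fun x y h => ?_⟩
  refine hsep _ trivial _ trivial fun c hc => (hdep c hc fun i hi => h i ?_).to_iff
  exact Set.mem_biUnion hc hi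

end Pi

section Atoms

variable {X : Type*} [MeasurableSpace X]

open Function in
theorem exists_pairwise_disjoint_measurableSet_mem_measurableAtom (e : ℕ → X) :
    ∃ E : ℕ → Set X, (∀ n, MeasurableSet (E n)) ∧ Pairwise (Disjoint on E) ∧
      ∀ m, ∃ n, e m ∈ E n ∧ e m ∈ measurableAtom (e n) := by
  have hsep : ∀ n m, ∃ B, MeasurableSet B ∧ e n ∈ B ∧ (e m ∈ B → e m ∈ measurableAtom (e n)) := by
    intro n m
    by_cases h : e m ∈ measurableAtom (e n)
    · exact ⟨Set.univ, .univ, trivial, fun _ => h⟩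
    · simp only [measurableAtom, Set.mem_iInter, not_forall] at h
      obtain ⟨B, hnB, hB, hmB⟩ := h
      exact ⟨B, hB, hnB, fun h => absurd h hmB⟩
  choose B hB hnB hmB using hsep
  let C : ℕ → Set X := fun n => ⋂ m, B n m
  refine ⟨disjointed C, MeasurableSet.disjointed fun n => .iInter (hB n), disjoint_disjointed C,
    fun m => ?_⟩
  have hm : e m ∈ ⋃ n, disjointed C n := by
    rw [iUnion_disjointed]
    exact Set.mem_iUnion_of_mem m (Set.mem_iInter.2 (hnB m))
  obtain ⟨n, hn⟩ := Set.mem_iUnion.1 hm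
  exact ⟨n, hn, hmB n m (Set.mem_iInter.1 (disjointed_subset C n hn) m)⟩

theorem lintegral_le_tsum_of_eq_zero_off_range (μ : Measure X) {e : ℕ → X} {E : ℕ → Set X}
    (hE : ∀ n, MeasurableSet (E n)) (he : ∀ m, ∃ n, e m ∈ E n ∧ e m ∈ measurableAtom (e n))
    {h : X → ℝ≥0∞} (hh : ∀ x ∉ Set.range e, h x = 0) :
    ∫⁻ x, h x ∂μ ≤ ∑' n, μ (E n) * h (e n) := by
  obtain ⟨g, hg, hgh, hint⟩ := exists_measurable_le_lintegral_eq μ h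
  have hgE : ∀ x, g x ≤ ∑' n, (E n).indicator (fun _ => h (e n)) x := by
    intro x
    by_cases hx : x ∈ Set.range e
    · obtain ⟨m, rfl⟩ := hx
      obtain ⟨n, hmn, hatom⟩ := he m
      calc g (e m) = g (e n) :=
            mem_of_mem_measurableAtom hatom (hg (measurableSet_singleton _)) rfl
        _ ≤ h (e n) := hgh _
        _ = (E n).indicator (fun _ => h (e n)) (e m) :=
            (Set.indicator_of_mem hmn (fun _ => h (e n))).symm
        _ ≤ _ := ENNReal.le_tsum n
    · exact (hgh x).trans ((hh x hx).trans_le zero_le)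
  calc ∫⁻ x, h x ∂μ = ∫⁻ x, g x ∂μ := hint
    _ ≤ ∫⁻ x, ∑' n, (E n).indicator (fun _ => h (e n)) x ∂μ := lintegral_mono hgE
    _ = ∑' n, μ (E n) * h (e n) := by
      rw [lintegral_tsum fun n => (measurable_const.indicator (hE n)).aemeasurable]
      exact tsum_congr fun n => by rw [lintegral_indicator_const (hE n), mul_comm]

end Atoms

theorem lintegral_lintegral_apply_le {X A : Type*} [MeasurableSpace X] [MeasurableSpace A]
    (μ : Measure X) [IsProbabilityMeasure μ] (Q : Measure (X → A))
    {c : X → A → ℝ≥0∞} (hc : ∀ x, Measurable (c x)) {π₀ : X → A} (hπ₀ : ∀ x, c x (π₀ x) = 0)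
    {b : ℝ≥0∞} (hb : ∀ x, ∫⁻ π, c x (π x) ∂Q ≤ b) :
    ∫⁻ π, ∫⁻ x, c x (π x) ∂μ ∂Q ≤ b := by
  classical
  obtain ⟨φ, hφ, hφle, hφint⟩ :=
    exists_measurable_le_lintegral_eq Q fun π => ∫⁻ x, c x (π x) ∂μ
  obtain ⟨S, hS, hφS⟩ := hφ.exists_countable_dependsOn
  obtain ⟨x₀⟩ := nonempty_of_isProbabilityMeasure μ
  obtain ⟨e, he⟩ := (hS.insert x₀).exists_eq_range (Set.insert_nonempty x₀ S)
  obtain ⟨E, hEm, hEd, hEe⟩ := exists_pairwise_disjoint_measurableSet_mem_measurableAtom e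
  have hφW : ∀ π, φ π ≤ ∑' n, μ (E n) * c (e n) (π (e n)) := by
    intro π
    let π' := (Set.range e).piecewise π π₀
    have hπ' : ∀ n, π' (e n) = π (e n) := fun n => Set.piecewise_eq_of_mem _ _ _ ⟨n, rfl⟩
    calc φ π = φ π' := hφS fun x hx =>
          (Set.piecewise_eq_of_mem _ _ _ (he ▸ Set.mem_insert_of_mem x₀ hx)).symm
      _ ≤ ∫⁻ x, c x (π' x) ∂μ := hφle π'
      _ ≤ ∑' n, μ (E n) * c (e n) (π' (e n)) :=
          lintegral_le_tsum_of_eq_zero_off_range μ hEm hEe fun x hx => by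
            rw [show π' x = π₀ x from Set.piecewise_eq_of_notMem _ _ _ hx, hπ₀]
      _ = _ := by simp only [hπ']
  calc ∫⁻ π, ∫⁻ x, c x (π x) ∂μ ∂Q = ∫⁻ π, φ π ∂Q := hφint
    _ ≤ ∫⁻ π, ∑' n, μ (E n) * c (e n) (π (e n)) ∂Q := lintegral_mono hφW
    _ = ∑' n, μ (E n) * ∫⁻ π, c (e n) (π (e n)) ∂Q := by
      have hmeas : ∀ n, Measurable fun π : X → A => c (e n) (π (e n)) :=
        fun n => (hc _).comp (measurable_pi_apply _)
      rw [lintegral_tsum fun n => ((hmeas n).const_mul _).aemeasurable]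
      exact tsum_congr fun n => lintegral_const_mul _ (hmeas n)
    _ ≤ ∑' n, μ (E n) * b := ENNReal.tsum_le_tsum fun n => mul_le_mul_right (hb _) _
    _ = μ (⋃ n, E n) * b := by rw [ENNReal.tsum_mul_right, measure_iUnion hEd hEm]
    _ ≤ b := mul_le_of_le_one_left' prob_le_one

theorem lintegral_comp_eq_sum_mul_measure_preimage {Ω A : Type*} [MeasurableSpace Ω]
    [MeasurableSpace A] [Fintype A] [MeasurableSingletonClass A] (Q : Measure Ω) {Y : Ω → A}
    (hY : Measurable Y) (c : A → ℝ≥0∞) :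
    ∫⁻ ω, c (Y ω) ∂Q = ∑ a, c a * Q (Y ⁻¹' {a}) := by
  rw [← lintegral_map (measurable_of_finite c) hY, lintegral_fintype]
  simp_rw [Measure.map_apply hY (measurableSet_singleton _)]

theorem mul_one_div_add_mul_le {K γ Δ : ℝ} (hK : 0 < K) (hγ : 0 < γ) (hΔ : 0 ≤ Δ) :
    Δ * (1 / (K + γ * Δ)) ≤ 1 / γ := by
  rw [mul_one_div, div_le_div_iff₀ (by positivity) hγ]
  linarith [mul_comm Δ γ]

theorem stmt_7_general {X : Type*} [MeasurableSpace X]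
    (D : Measure X) [IsProbabilityMeasure D]
    {A : Type*} [Fintype A]
    [MeasurableSpace A] [MeasurableSingletonClass A]
    (f : X → A → ℝ)
    (ahat : X → A)
    (hahat : ∀ x a, f x a ≤ f x (ahat x))
    (γ : ℝ) (hγ : 0 < γ)
    (p : X → A → ℝ)
    (hp_ne : ∀ x, ∀ a, a ≠ ahat x →
      p x a = 1 / ((Fintype.card A : ℝ) + γ * (f x (ahat x) - f x a)))
    (Q : Measure (X → A))
    (hQ : ∀ x a, Q {π : X → A | π x = a} = ENNReal.ofReal (p x a)) :
    ∫ π : X → A, (∫ x, (f x (ahat x) - f x (π x)) ∂D) ∂Q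
      ≤ (Fintype.card A : ℝ) / γ := by
  let c : X → A → ℝ≥0∞ := fun x a => ‖f x (ahat x) - f x a‖ₑ
  have hterm : ∀ x a, c x a * ENNReal.ofReal (p x a) ≤ ENNReal.ofReal (1 / γ) := by
    intro x a
    rcases eq_or_ne a (ahat x) with rfl | ha
    · simp [c]
    have hgap : 0 ≤ f x (ahat x) - f x a := sub_nonneg.2 (hahat x a)
    rw [show c x a = ENNReal.ofReal _ from Real.enorm_of_nonneg hgap, ← ENNReal.ofReal_mul hgap,
      hp_ne x a ha]
    exact ENNReal.ofReal_le_ofReal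
      (mul_one_div_add_mul_le (Nat.cast_pos.2 (Fintype.card_pos_iff.2 ⟨a⟩)) hγ hgap)
  have hmarginal : ∀ x, ∫⁻ π, c x (π x) ∂Q ≤ ENNReal.ofReal (Fintype.card A / γ) := by
    intro x
    rw [lintegral_comp_eq_sum_mul_measure_preimage Q (measurable_pi_apply x)]
    calc ∑ a, c x a * Q ((fun π : X → A => π x) ⁻¹' {a})
        ≤ ∑ _a : A, ENNReal.ofReal (1 / γ) := sum_le_sum fun a _ => (hQ x a).symm ▸ hterm x a
      _ = ENNReal.ofReal (Fintype.card A / γ) := by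
        rw [sum_const, card_univ, nsmul_eq_mul, ← ENNReal.ofReal_natCast,
          ← ENNReal.ofReal_mul (Nat.cast_nonneg _), mul_one_div]
  have hregret : ‖∫ π, ∫ x, (f x (ahat x) - f x (π x)) ∂D ∂Q‖ₑ
      ≤ ENNReal.ofReal (Fintype.card A / γ) :=
    calc _ ≤ ∫⁻ π, ‖∫ x, (f x (ahat x) - f x (π x)) ∂D‖ₑ ∂Q :=
          enorm_integral_le_lintegral_enorm _
      _ ≤ ∫⁻ π, ∫⁻ x, c x (π x) ∂D ∂Q :=
          lintegral_mono fun π => enorm_integral_le_lintegral_enorm _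
      _ ≤ _ := lintegral_lintegral_apply_le D Q (fun x => measurable_of_finite (c x))
          (π₀ := ahat) (fun x => by simp [c]) hmarginal
  rw [← ofReal_norm, ENNReal.ofReal_le_ofReal_iff (by positivity)] at hregret
  exact (Real.le_norm_self _).trans hregret

theorem stmt_7 {X : Type*} [MeasurableSpace X]
    (D : Measure X) [IsProbabilityMeasure D]
    {A : Type*} [Fintype A] [DecidableEq A]
    [MeasurableSpace A] [MeasurableSingletonClass A]
    (hK : 2 ≤ Fintype.card A)
    (f : X → A → ℝ) (hf01 : ∀ x a, f x a ∈ Set.Icc (0:ℝ) 1)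
    (hf_meas : ∀ a, Measurable fun x => f x a)
    (ahat : X → A) (hahat_meas : Measurable ahat)
    (hahat : ∀ x a, f x a ≤ f x (ahat x))
    (γ : ℝ) (hγ : 0 < γ)
    (p : X → A → ℝ)
    (hp_ne : ∀ x, ∀ a, a ≠ ahat x →
      p x a = 1 / ((Fintype.card A : ℝ) + γ * (f x (ahat x) - f x a)))
    (hp_hat : ∀ x, p x (ahat x) = 1 - ∑ a ∈ Finset.univ.erase (ahat x), p x a)
    (Q : Measure (X → A)) [IsProbabilityMeasure Q]
    (hQ : ∀ x a, Q {π : X → A | π x = a} = ENNReal.ofReal (p x a))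
    (hQ_int : Integrable (fun π : X → A =>
      ∫ x, (f x (ahat x) - f x (π x)) ∂D) Q) :
    ∫ π : X → A, (∫ x, (f x (ahat x) - f x (π x)) ∂D) ∂Q
      ≤ (Fintype.card A : ℝ) / γ :=
  stmt_7_general D f ahat hahat γ hγ p hp_ne Q hQ
end
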